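/- arXiv:1809.10783 — 3 statements merged into one kernel-verified Lean document; each statement's English description precedes it below -/
import Mathlib

section
/- If A' is a selection basis for A, then Player I has a winning predetermined strategy in G₁(A, B) if and only if Player I has a winning predetermined strategy in G₁(A', B). -/
/-! Replacing each of Player I's moves by a smaller one only restricts Player II's legal replies,
so a winning predetermined strategy survives passage to a coinitial family; the converse is
trivial as `A' ⊆ A`. -/

open Set

variable {α : Type*}

/-- `R` is a reflection of `A`: for every `A₀ ∈ A` there is a choice function `f` on `R`
(`f r ∈ r` for all `r ∈ R`) whose range on `R` belongs to `A` and is contained in `A₀`. -/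
def Reflection (R A : Set (Set α)) : Prop :=
  ∀ A₀ ∈ A, ∃ f : Set α → α, (∀ r ∈ R, f r ∈ r) ∧ f '' R ∈ A ∧ f '' R ⊆ A₀

/-- `A'` is a selection basis for `A`: `A' ⊆ A` and `A'` is coinitial in `A` under `⊆`. -/
def SelBasis (A' A : Set (Set α)) : Prop :=
  A' ⊆ A ∧ ∀ A₀ ∈ A, ∃ A₁ ∈ A', A₁ ⊆ A₀

/-- Player I has a winning predetermined strategy in the selection game on `A` where
Player II wins iff the set of its choices satisfies `W`. -/
def IPreWin (A : Set (Set α)) (W : Set α → Prop) : Prop :=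
  ∃ σ : ℕ → Set α, (∀ n, σ n ∈ A) ∧
    ∀ b : ℕ → α, (∀ n, b n ∈ σ n) → ¬ W (Set.range b)

/-- Player II has a winning Markov strategy in the selection game on `A` where
Player II wins iff the set of its choices satisfies `W`. -/
def IIMarkWin (A : Set (Set α)) (W : Set α → Prop) : Prop :=
  ∃ τ : Set α → ℕ → α, (∀ A₀ ∈ A, ∀ n, τ A₀ n ∈ A₀) ∧
    ∀ a : ℕ → Set α, (∀ n, a n ∈ A) → W (Set.range fun n => τ (a n) n)

/-- Player I has a winning perfect-information strategy in the selection game on `A`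
where Player II wins iff the set of its choices satisfies `W`.  The strategy is a
function of the finite sequence of Player II's previous moves. -/
def IWin (A : Set (Set α)) (W : Set α → Prop) : Prop :=
  ∃ σ : List α → Set α, (∀ h, σ h ∈ A) ∧
    ∀ b : ℕ → α, (∀ n, b n ∈ σ (List.ofFn fun i : Fin n => b i)) →
      ¬ W (Set.range b)

/-- Player II has a winning perfect-information strategy in the selection game on `A`
where Player II wins iff the set of its choices satisfies `W`.  The strategy is a
function of the finite sequence of Player I's moves so far (including the latest). -/
def IIWin (A : Set (Set α)) (W : Set α → Prop) : Prop :=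
  ∃ τ : List (Set α) → α,
    ∀ a : ℕ → Set α, (∀ n, a n ∈ A) →
      (∀ n, τ (List.ofFn fun i : Fin (n + 1) => a i) ∈ a n) ∧
      W (Set.range fun n => τ (List.ofFn fun i : Fin (n + 1) => a i))

theorem IPreWin.of_forall_exists_subset {A A' : Set (Set α)} {W : Set α → Prop}
    (hA : ∀ A₀ ∈ A, ∃ A₁ ∈ A', A₁ ⊆ A₀) : IPreWin A W → IPreWin A' W := by
  rintro ⟨σ, hσA, hσwin⟩
  choose σ' hσ'A' hσ'σ using fun n => hA (σ n) (hσA n)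
  exact ⟨σ', hσ'A', fun b hb => hσwin b fun n => hσ'σ n (hb n)⟩

theorem IPreWin.mono {A A' : Set (Set α)} {W : Set α → Prop} (hA : A ⊆ A') :
    IPreWin A W → IPreWin A' W :=
  IPreWin.of_forall_exists_subset fun A₀ h₀ => ⟨A₀, hA h₀, subset_rfl⟩

theorem stmt5 (A' A B : Set (Set α)) (h : SelBasis A' A) :
    IPreWin A (· ∈ B) ↔ IPreWin A' (· ∈ B) :=
  ⟨IPreWin.of_forall_exists_subset h.2, IPreWin.mono h.1⟩
end

section
/- For the Rothberger game on a topological space X: Player I has a winning predetermined strategy in the Rothberger game G₁(O_X, O_X) if and only if Player II has a winning Markov strategy in the point-open game G₁(P_X, ¬O_X); and Player II has a winning Markov strategy in G₁(O_X, O_X) if and only if Player I has a winning predetermined strategy in G₁(P_X, ¬O_X). -/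
/-!
A choice function `f` on the point-bases `T_{X,x}` picks one basic neighbourhood of every point,
so its range is a basic open cover; conversely every basic open cover contains such a range.
So `P_X` is a reflection of `O_X`, and for any reflection `R` of `A` the games on `A` and on `R`
are dual. Every move `A₀ ∈ A` meets every move `r ∈ R`, so a predetermined strategy in one game
yields a Markov answer in the other. Conversely, in each round some `r ∈ R` consists only of
answers of a given Markov strategy on `A`: otherwise a choice function avoiding those answers
would have a range in `A` that the strategy cannot answer.
-/

open Set

variable {α : Type*}

/-- The collection of covers of `X` by members of the basis `T`. -/
def OX {X : Type*} (T : Set (Set X)) : Set (Set (Set X)) :=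
  {U | U ⊆ T ∧ ⋃₀ U = Set.univ}

/-- The collection of local point-bases `T_{X,x}` for `x ∈ X`. -/
def PX {X : Type*} (T : Set (Set X)) : Set (Set (Set X)) :=
  {r | ∃ x : X, r = {U ∈ T | x ∈ U}}

/-- `SelBasis (choiceImages R) A` is the paper's "`R` is a reflection of `A`"; unlike `Reflection`
it also requires the range of every choice function on `R` to lie in `A`. -/
def choiceImages (R : Set (Set α)) : Set (Set α) :=
  {B | ∃ f : Set α → α, (∀ r ∈ R, f r ∈ r) ∧ f '' R = B}

section Duality

variable {R A : Set (Set α)}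

theorem SelBasis.inter_nonempty (h : SelBasis (choiceImages R) A) {A₀ r : Set α}
    (hA₀ : A₀ ∈ A) (hr : r ∈ R) : (A₀ ∩ r).Nonempty := by
  obtain ⟨_, ⟨f, hf, rfl⟩, hsub⟩ := h.2 A₀ hA₀
  exact ⟨f r, hsub (mem_image_of_mem f hr), hf r hr⟩

theorem exists_mem_subset_image_of_choiceImages_subset (hR : choiceImages R ⊆ A)
    {τ : Set α → α} (hτ : ∀ A₀ ∈ A, τ A₀ ∈ A₀) : ∃ r ∈ R, r ⊆ τ '' A := by
  classical
  by_contra! hcon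
  choose f hfr hfτ using fun r (hr : r ∈ R) => not_subset.mp (hcon r hr)
  set g : Set α → α := fun r => if hr : r ∈ R then f r hr else τ ∅
  have hg : ∀ r (hr : r ∈ R), g r = f r hr := fun r hr => dif_pos hr
  have hgA : g '' R ∈ A := hR ⟨g, fun r hr => hg r hr ▸ hfr r hr, rfl⟩
  obtain ⟨r, hr, hτg⟩ := hτ _ hgA
  exact hfτ r hr ⟨_, hgA, hτg.symm.trans (hg r hr)⟩

variable [Nonempty α]

theorem iPreWin_iff_iIMarkWin_not (h : SelBasis (choiceImages R) A) (W : Set α → Prop) :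
    IPreWin A W ↔ IIMarkWin R (fun B => ¬ W B) := by
  constructor
  · rintro ⟨σ, hσA, hσwin⟩
    have hτ : ∀ r ∈ R, ∀ n, Classical.epsilon (· ∈ σ n ∩ r) ∈ σ n ∩ r :=
      fun r hr n => Classical.epsilon_spec (h.inter_nonempty (hσA n) hr)
    exact ⟨fun r n => Classical.epsilon (· ∈ σ n ∩ r), fun r hr n => (hτ r hr n).2,
      fun a ha => hσwin _ fun n => (hτ (a n) (ha n) n).1⟩
  · rintro ⟨τ, hτR, hτwin⟩
    refine ⟨fun n => (τ · n) '' R, fun n => h.1 ⟨(τ · n), fun r hr => hτR r hr n, rfl⟩, ?_⟩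
    intro b hb
    choose r hr hτr using hb
    simpa only [hτr] using hτwin r hr

theorem iIMarkWin_iff_iPreWin_not (h : SelBasis (choiceImages R) A) (W : Set α → Prop) :
    IIMarkWin A W ↔ IPreWin R (fun B => ¬ W B) := by
  constructor
  · rintro ⟨τ, hτA, hτwin⟩
    choose r hr hrτ using fun n =>
      exists_mem_subset_image_of_choiceImages_subset h.1 (τ := (τ · n)) (hτA · · n)
    refine ⟨r, hr, fun b hb => not_not.mpr ?_⟩
    choose a ha hτa using fun n => hrτ n (hb n)
    simpa only [hτa] using hτwin a ha
  · rintro ⟨σ, hσR, hσwin⟩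
    have hτ : ∀ A₀ ∈ A, ∀ n, Classical.epsilon (· ∈ A₀ ∩ σ n) ∈ A₀ ∩ σ n :=
      fun A₀ hA₀ n => Classical.epsilon_spec (h.inter_nonempty hA₀ (hσR n))
    exact ⟨fun A₀ n => Classical.epsilon (· ∈ A₀ ∩ σ n), fun A₀ hA₀ n => (hτ A₀ hA₀ n).1,
      fun a ha => not_not.mp (hσwin _ fun n => (hτ (a n) (ha n) n).2)⟩

end Duality

theorem selBasis_choiceImages_PX_OX {X : Type*} (T : Set (Set X)) :
    SelBasis (choiceImages (PX T)) (OX T) := by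
  constructor
  · rintro _ ⟨f, hf, rfl⟩
    refine ⟨?_, eq_univ_of_forall fun x => ?_⟩
    · rintro _ ⟨_, ⟨x, rfl⟩, rfl⟩
      exact (hf _ ⟨x, rfl⟩).1
    · exact ⟨f _, mem_image_of_mem f ⟨x, rfl⟩, (hf _ ⟨x, rfl⟩).2⟩
  · intro A₀ hA₀
    have hmeet : ∀ r ∈ PX T, ∃ U, U ∈ A₀ ∩ r := by
      rintro _ ⟨x, rfl⟩
      obtain ⟨U, hU, hxU⟩ := mem_sUnion.mp (hA₀.2.symm ▸ mem_univ x)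
      exact ⟨U, hU, hA₀.1 hU, hxU⟩
    have hf : ∀ r ∈ PX T, Classical.epsilon (· ∈ A₀ ∩ r) ∈ A₀ ∩ r :=
      fun r hr => Classical.epsilon_spec (hmeet r hr)
    refine ⟨_, ⟨fun r => Classical.epsilon (· ∈ A₀ ∩ r), fun r hr => (hf r hr).2, rfl⟩, ?_⟩
    rintro _ ⟨r, hr, rfl⟩
    exact (hf r hr).1

theorem stmt15_general {X : Type*} (T : Set (Set X)) :
    (IPreWin (OX T) (· ∈ OX T) ↔ IIMarkWin (PX T) (· ∉ OX T)) ∧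
      (IIMarkWin (OX T) (· ∈ OX T) ↔ IPreWin (PX T) (· ∉ OX T)) :=
  ⟨iPreWin_iff_iIMarkWin_not (selBasis_choiceImages_PX_OX T) _,
    iIMarkWin_iff_iPreWin_not (selBasis_choiceImages_PX_OX T) _⟩

theorem stmt15 {X : Type*} [TopologicalSpace X] (T : Set (Set X))
    (hT : TopologicalSpace.IsTopologicalBasis T) (hne : ∀ U ∈ T, U.Nonempty) :
    (IPreWin (OX T) (· ∈ OX T) ↔ IIMarkWin (PX T) (· ∉ OX T)) ∧
      (IIMarkWin (OX T) (· ∈ OX T) ↔ IPreWin (PX T) (· ∉ OX T)) :=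
  stmt15_general T
end

section
/- For the Rothberger game on a topological space X: Player I has a winning perfect-information strategy in G₁(O_X, O_X) if and only if Player II has a winning perfect-information strategy in the point-open game G₁(P_X, ¬O_X); and Player II has a winning strategy in G₁(O_X, O_X) if and only if Player I has a winning strategy in G₁(P_X, ¬O_X). -/
open Set

variable {α : Type*}

/-!
Duality holds for any families `A`, `R` such that every choice function on `R` has its range in
`A` and every member of `A` meets every member of `R`; for `A = O_X`, `R = P_X` both follow from
`P_X` being a reflection of `O_X`.

A winning strategy in one game is transferred to the dual game by having the new player
simulate a ghost play of the old game. If Player I wins in one game, then Player II in the other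
answers each move with a point of it that lies in the set the ghost Player I would play now, so
the answers form a legal ghost play and lose. If Player II wins on `R` with `τ`, then Player I plays
the range of `r ↦ τ (h ++ [r])`, which is in `A`; each answer of Player II is then `τ`'s answer to
some ghost move `r`. If Player II wins on `A` with `τ`, then at each position some `r ∈ R` consists
only of answers of `τ`: otherwise a choice function avoiding them has a range `A₀ ∈ A`, yet
`τ`'s answer to `A₀` lies in `A₀`. Player I plays this `r`.
-/

namespace List

variable {β γ : Type*}

def historyScan (step : List γ → β → γ) (l : List β) : List γ :=
  l.foldl (fun acc b => acc ++ [step acc b]) []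

theorem historyScan_concat (step : List γ → β → γ) (l : List β) (b : β) :
    historyScan step (l ++ [b]) = historyScan step l ++ [step (historyScan step l) b] := by
  simp only [historyScan, foldl_append, foldl_cons, foldl_nil]

theorem forall_mem_historyScan {step : List γ → β → γ} {p : γ → Prop}
    (hstep : ∀ h b, p (step h b)) (l : List β) : ∀ x ∈ historyScan step l, p x := by
  induction l using reverseRecOn with
  | nil => simp [historyScan]
  | append_singleton l b ih =>
    rw [historyScan_concat]
    intro x hx
    rcases mem_append.1 hx with hx | hx
    · exact ih x hx
    · rw [mem_singleton.1 hx]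
      exact hstep _ _

theorem ofFn_succ_eq_concat (a : ℕ → β) (n : ℕ) :
    (ofFn fun i : Fin (n + 1) => a i) = (ofFn fun i : Fin n => a i) ++ [a n] :=
  ofFn_succ_last

theorem ofFn_getD (l : List β) (d : β) :
    (ofFn fun i : Fin l.length => l.getD i d) = l := by
  simp only [getD_eq_getElem _ _ (Fin.isLt _), ofFn_getElem]

end List

open List

section Games

variable {β γ : Type*}

def historyScanSeq (step : List γ → β → γ) (a : ℕ → β) (n : ℕ) : γ :=
  step (historyScan step (ofFn fun i : Fin n => a i)) (a n)

theorem historyScan_ofFn (step : List γ → β → γ) (a : ℕ → β) (n : ℕ) :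
    historyScan step (ofFn fun i : Fin n => a i) =
      ofFn fun i : Fin n => historyScanSeq step a i := by
  induction n with
  | zero => rfl
  | succ n ih =>
    rw [ofFn_succ_eq_concat, historyScan_concat, ofFn_succ_eq_concat, ← ih]
    rfl

theorem IIWin.mono {A : Set (Set α)} {W W' : Set α → Prop} (hW : ∀ s, W s → W' s) :
    IIWin A W → IIWin A W' := by
  rintro ⟨τ, hτ⟩
  exact ⟨τ, fun a ha => ⟨(hτ a ha).1, hW _ (hτ a ha).2⟩⟩

/-- `IIWin` only asks for legality along infinite legal plays; repeating `r` forever extends the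
position `h ++ [r]` to such a play. -/
theorem apply_append_singleton_mem {A : Set (Set α)} {τ : List (Set α) → α}
    (hlegal : ∀ a : ℕ → Set α, (∀ n, a n ∈ A) → ∀ n, τ (ofFn fun i : Fin (n + 1) => a i) ∈ a n)
    {h : List (Set α)} (hh : ∀ s ∈ h, s ∈ A) {r : Set α} (hr : r ∈ A) : τ (h ++ [r]) ∈ r := by
  have hmem : ∀ n, (h ++ [r]).getD n r ∈ A := by
    intro n
    by_cases hn : n < (h ++ [r]).length
    · rw [getD_eq_getElem _ _ hn]
      rcases mem_append.1 (getElem_mem hn) with hs | hs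
      · exact hh _ hs
      · rwa [mem_singleton.1 hs]
    · rwa [getD_eq_default _ _ (not_lt.1 hn)]
  have key := hlegal _ hmem h.length
  have hlen : (h ++ [r]).length = h.length + 1 := by simp
  rw [← hlen, ofFn_getD] at key
  simpa using key

theorem iiWin_of_historyScan [Nonempty α] {A : Set (Set α)} {W : Set α → Prop}
    (step : List α → Set α → α)
    (hstep : ∀ a : ℕ → Set α, (∀ n, a n ∈ A) →
      (∀ n, historyScanSeq step a n ∈ a n) ∧ W (range (historyScanSeq step a))) :
    IIWin A W := by
  refine ⟨fun l => (historyScan step l).getLastD (Classical.arbitrary α), fun a ha => ?_⟩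
  have hlast : ∀ n, (historyScan step (ofFn fun i : Fin (n + 1) => a i)).getLastD
      (Classical.arbitrary α) = historyScanSeq step a n := by
    intro n
    rw [ofFn_succ_eq_concat, historyScan_concat, getLastD_concat]
    rfl
  simpa only [hlast] using hstep a ha

theorem iWin_of_ghost {C D : Set (Set α)} {V : Set α → Prop} (τ : List (Set α) → α)
    (M : List (Set α) → Set α)
    (hM : ∀ h, (∀ c ∈ h, c ∈ C) → M h ∈ D ∧ M h ⊆ (fun c => τ (h ++ [c])) '' C)
    (hτ : ∀ a : ℕ → Set α, (∀ n, a n ∈ C) →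
      ¬ V (range fun n => τ (ofFn fun i : Fin (n + 1) => a i))) :
    IWin D V := by
  rcases C.eq_empty_or_nonempty with rfl | ⟨c₀, hc₀⟩
  · refine ⟨fun _ => M [], fun _ => (hM [] (by simp)).1, fun b hb => ?_⟩
    obtain ⟨c, hc, -⟩ := (hM [] (by simp)).2 (hb 0)
    exact absurd hc (notMem_empty c)
  classical
  let ghost : List (Set α) → α → Set α := fun h x =>
    if hx : ∃ c ∈ C, τ (h ++ [c]) = x then hx.choose else c₀
  have ghost_mem : ∀ h x, ghost h x ∈ C := by
    intro h x
    simp only [ghost]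
    split_ifs with hx
    exacts [hx.choose_spec.1, hc₀]
  have ghost_spec : ∀ h x, (∃ c ∈ C, τ (h ++ [c]) = x) → τ (h ++ [ghost h x]) = x := by
    intro h x hx
    simp only [ghost, dif_pos hx]
    exact hx.choose_spec.2
  have hghostC : ∀ l c, c ∈ historyScan ghost l → c ∈ C :=
    fun l => forall_mem_historyScan ghost_mem l
  refine ⟨fun l => M (historyScan ghost l), fun l => (hM _ (hghostC l)).1, fun b hb => ?_⟩
  have hanswer : ∀ n, τ (ofFn fun i : Fin (n + 1) => historyScanSeq ghost b i) = b n := by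
    intro n
    rw [ofFn_succ_eq_concat, ← historyScan_ofFn]
    exact ghost_spec _ _ ((hM _ (hghostC _)).2 (hb n))
  simpa only [hanswer] using hτ (historyScanSeq ghost b) fun n => ghost_mem _ _

theorem iiWin_not_of_iWin [Nonempty α] {A R : Set (Set α)} {W : Set α → Prop}
    (hmeet : ∀ s ∈ A, ∀ r ∈ R, (s ∩ r).Nonempty) :
    IWin A W → IIWin R (fun s => ¬ W s) := by
  rintro ⟨σ, hσA, hσ⟩
  choose! pick hpick using fun h r (hr : r ∈ R) => hmeet (σ h) (hσA h) r hr
  refine iiWin_of_historyScan pick fun a ha => ?_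
  have hb : ∀ n,
      historyScanSeq pick a n ∈ σ (ofFn fun i : Fin n => historyScanSeq pick a i) ∩ a n := by
    intro n
    rw [← historyScan_ofFn]
    exact hpick _ _ (ha n)
  exact ⟨fun n => (hb n).2, hσ _ fun n => (hb n).1⟩

theorem iWin_of_iiWin_not {A R : Set (Set α)} {W : Set α → Prop}
    (hchoice : ∀ f : Set α → α, (∀ r ∈ R, f r ∈ r) → f '' R ∈ A) :
    IIWin R (fun s => ¬ W s) → IWin A W := by
  rintro ⟨τ, hτ⟩
  refine iWin_of_ghost τ (fun h => (fun r => τ (h ++ [r])) '' R) (fun h hh => ⟨?_, subset_rfl⟩)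
    fun a ha => (hτ a ha).2
  exact hchoice _ fun r hr => apply_append_singleton_mem (fun a ha => (hτ a ha).1) hh hr

theorem exists_mem_subset_image_of_legal {A R : Set (Set α)}
    (hchoice : ∀ f : Set α → α, (∀ r ∈ R, f r ∈ r) → f '' R ∈ A) {τ : List (Set α) → α}
    (hlegal : ∀ a : ℕ → Set α, (∀ n, a n ∈ A) → ∀ n, τ (ofFn fun i : Fin (n + 1) => a i) ∈ a n)
    {h : List (Set α)} (hh : ∀ s ∈ h, s ∈ A) :
    ∃ r ∈ R, r ⊆ (fun s => τ (h ++ [s])) '' A := by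
  have : Nonempty α := ⟨τ []⟩
  by_contra! hno
  choose! avoid havoid using fun r hr => not_subset.1 (hno r hr)
  have hA₀ : avoid '' R ∈ A := hchoice avoid fun r hr => (havoid r hr).1
  obtain ⟨r, hr, hrτ⟩ := apply_append_singleton_mem hlegal hh hA₀
  exact (havoid r hr).2 ⟨_, hA₀, hrτ.symm⟩

theorem iWin_not_of_iiWin {A R : Set (Set α)} {W : Set α → Prop}
    (hchoice : ∀ f : Set α → α, (∀ r ∈ R, f r ∈ r) → f '' R ∈ A) :
    IIWin A W → IWin R (fun s => ¬ W s) := by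
  rintro ⟨τ, hτ⟩
  choose! M hM using fun h (hh : ∀ s ∈ h, s ∈ A) =>
    exists_mem_subset_image_of_legal hchoice (fun a ha => (hτ a ha).1) hh
  exact iWin_of_ghost τ M hM fun a ha => not_not_intro (hτ a ha).2

theorem iiWin_of_iWin_not [Nonempty α] {A R : Set (Set α)} {W : Set α → Prop}
    (hmeet : ∀ s ∈ A, ∀ r ∈ R, (s ∩ r).Nonempty) :
    IWin R (fun s => ¬ W s) → IIWin A W := fun hI =>
  (iiWin_not_of_iWin (fun r hr s hs => inter_comm s r ▸ hmeet s hs r hr) hI).mono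
    fun _ => not_not.1

theorem iWin_iff_iiWin_not_and_iiWin_iff_iWin_not [Nonempty α] {A R : Set (Set α)}
    {W : Set α → Prop} (hmeet : ∀ s ∈ A, ∀ r ∈ R, (s ∩ r).Nonempty)
    (hchoice : ∀ f : Set α → α, (∀ r ∈ R, f r ∈ r) → f '' R ∈ A) :
    (IWin A W ↔ IIWin R (fun s => ¬ W s)) ∧ (IIWin A W ↔ IWin R (fun s => ¬ W s)) :=
  ⟨⟨iiWin_not_of_iWin hmeet, iWin_of_iiWin_not hchoice⟩,
    ⟨iWin_not_of_iiWin hchoice, iiWin_of_iWin_not hmeet⟩⟩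

end Games

section Topology

variable {X : Type*} (T : Set (Set X))

theorem inter_nonempty_of_mem_OX_of_mem_PX :
    ∀ 𝒰 ∈ OX T, ∀ r ∈ PX T, (𝒰 ∩ r).Nonempty := by
  rintro 𝒰 ⟨h𝒰T, h𝒰⟩ r ⟨x, rfl⟩
  obtain ⟨V, hV, hxV⟩ := mem_sUnion.1 (h𝒰 ▸ mem_univ x)
  exact ⟨V, hV, h𝒰T hV, hxV⟩

theorem image_mem_OX_of_mem_PX (f : Set (Set X) → Set X) (hf : ∀ r ∈ PX T, f r ∈ r) :
    f '' PX T ∈ OX T := by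
  refine ⟨?_, eq_univ_of_forall fun x => ?_⟩
  · rintro _ ⟨_, ⟨x, rfl⟩, rfl⟩
    exact (hf _ ⟨x, rfl⟩).1
  · exact mem_sUnion.2 ⟨_, mem_image_of_mem f ⟨x, rfl⟩, (hf _ ⟨x, rfl⟩).2⟩

end Topology

theorem stmt16_general {X : Type*} (T : Set (Set X)) :
    (IWin (OX T) (· ∈ OX T) ↔ IIWin (PX T) (· ∉ OX T)) ∧
      (IIWin (OX T) (· ∈ OX T) ↔ IWin (PX T) (· ∉ OX T)) :=
  iWin_iff_iiWin_not_and_iiWin_iff_iWin_not (inter_nonempty_of_mem_OX_of_mem_PX T)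
    (image_mem_OX_of_mem_PX T)

theorem stmt16 {X : Type*} [TopologicalSpace X] (T : Set (Set X))
    (hT : TopologicalSpace.IsTopologicalBasis T) (hne : ∀ U ∈ T, U.Nonempty) :
    (IWin (OX T) (· ∈ OX T) ↔ IIWin (PX T) (· ∉ OX T)) ∧
      (IIWin (OX T) (· ∈ OX T) ↔ IWin (PX T) (· ∉ OX T)) :=
  stmt16_general T
end
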